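/- Every P_4-free graph G satisfies td(G) = td₂(G), i.e., its treedepth equals its 2-treedepth. -/

import Mathlib

open Classical

variable {V : Type}

/-- Reachability within a vertex subset `s` of the graph `G`. -/
def ReachIn (G : SimpleGraph V) (s : Finset V) (u v : V) : Prop :=
  Relation.ReflTransGen (fun a b => a ∈ s ∧ b ∈ s ∧ G.Adj a b) u v

/-- The induced subgraph of `G` on `s` is (nonempty and) connected. -/
def ConnIn (G : SimpleGraph V) (s : Finset V) : Prop :=
  s.Nonempty ∧ ∀ u ∈ s, ∀ v ∈ s, ReachIn G s u v

/-- The vertex set of the connected component of `v` in the induced subgraph on `s`. -/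
noncomputable def compIn (G : SimpleGraph V) (s : Finset V) (v : V) : Finset V :=
  s.filter (fun u => ReachIn G s v u)

/-- Fuel-based recursion computing the treedepth of the induced subgraph of `G` on `s`
(correct whenever the fuel is at least `s.card`): treedepth of the null graph is `0`;
for a connected graph it is `1 + min_v td(G - v)`; otherwise the max over components. -/
noncomputable def tdAux (G : SimpleGraph V) : ℕ → Finset V → ℕ
  | 0, _ => 0
  | n+1, s =>
    if hs : s = ∅ then 0
    else if ConnIn G s then
      1 + s.inf' (Finset.nonempty_of_ne_empty hs) (fun v => tdAux G n (s.erase v))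
    else
      s.sup (fun v => tdAux G n (compIn G s v))

/-- The treedepth of the induced subgraph of `G` on the vertex set `s`. -/
noncomputable def tdOn (G : SimpleGraph V) (s : Finset V) : ℕ := tdAux G s.card s

/-- The treedepth of a finite graph. -/
noncomputable def td (G : SimpleGraph V) [Fintype V] : ℕ := tdOn G Finset.univ

/-- `B` induces a block-like graph: connected and with no cut vertex
(removing any vertex leaves it connected, when nonempty). -/
def IsBlockSet (G : SimpleGraph V) (B : Finset V) : Prop :=
  ConnIn G B ∧ ∀ v ∈ B, (B.erase v).Nonempty → ConnIn G (B.erase v)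

/-- `B` is a block of the induced subgraph of `G` on `s`: a maximal connected
subgraph without a cut vertex. -/
def IsBlock (G : SimpleGraph V) (s B : Finset V) : Prop :=
  B ⊆ s ∧ IsBlockSet G B ∧ ∀ B' : Finset V, B ⊆ B' → B' ⊆ s → IsBlockSet G B' → B' = B

/-- Fuel-based recursion computing the 2-treedepth of the induced subgraph of `G` on `s`
(correct whenever the fuel is at least `s.card`): `0` for the null graph;
`1 + min_v td₂(G - v)` if the graph is a block; the max over blocks otherwise. -/
noncomputable def td2Aux (G : SimpleGraph V) : ℕ → Finset V → ℕ
  | 0, _ => 0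
  | n+1, s =>
    if hs : s = ∅ then 0
    else if IsBlockSet G s then
      1 + s.inf' (Finset.nonempty_of_ne_empty hs) (fun v => td2Aux G n (s.erase v))
    else
      (s.powerset.filter (fun B => IsBlock G s B)).sup (fun B => td2Aux G n B)

/-- The 2-treedepth of the induced subgraph of `G` on `s`. -/
noncomputable def td2On (G : SimpleGraph V) (s : Finset V) : ℕ := td2Aux G s.card s

/-- The 2-treedepth of a finite graph. -/
noncomputable def td2 (G : SimpleGraph V) [Fintype V] : ℕ := td2On G Finset.univ

/-- `G` contains a path on `m` vertices as a subgraph. -/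
def HasPathOn (G : SimpleGraph V) (m : ℕ) : Prop :=
  ∃ p : Fin m → V, Function.Injective p ∧
    ∀ i : Fin m, ∀ h : i.1 + 1 < m, G.Adj (p i) (p ⟨i.1 + 1, h⟩)

/-- `G` contains an induced path on `m` vertices: `m` distinct vertices with
adjacency exactly between consecutive ones. -/
def HasInducedPathOn (G : SimpleGraph V) (m : ℕ) : Prop :=
  ∃ p : Fin m → V, Function.Injective p ∧
    ∀ i j : Fin m, G.Adj (p i) (p j) ↔ (i.1 + 1 = j.1 ∨ j.1 + 1 = i.1)

/-- `G` is `P_t`-free: it has no induced path on `t` vertices. -/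
def PtFree (G : SimpleGraph V) (t : ℕ) : Prop := ¬ HasInducedPathOn G t

/-!
Both invariants split a disconnected graph into its components (for 2-treedepth because every
block lies in a component) and delete a vertex from a block, so they can only differ at a
connected graph `s` with a cut vertex `v`. If `G` is `P_4`-free, such a `v` is adjacent to every
other vertex: otherwise some component of `s - v` contains an edge `ab` with `a ≁ v ∼ b`, and a
neighbour `y` of `v` in another component yields the induced path `y v b a`. Deleting a
dominating vertex is optimal for treedepth, and the blocks of `s` are exactly the sets `v + C`
for the components `C` of `s - v`, so both invariants equal `max_C td(v + C) = 1 + td(s - v)`.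
-/

namespace ReachIn

variable {G : SimpleGraph V} {s t : Finset V} {u v w : V}

lemma single (hu : u ∈ s) (hv : v ∈ s) (h : G.Adj u v) : ReachIn G s u v :=
  Relation.ReflTransGen.single ⟨hu, hv, h⟩

lemma trans (h₁ : ReachIn G s u v) (h₂ : ReachIn G s v w) : ReachIn G s u w :=
  Relation.ReflTransGen.trans h₁ h₂

lemma symm (h : ReachIn G s u v) : ReachIn G s v u := by
  induction h with
  | refl => exact Relation.ReflTransGen.refl
  | tail _ hstep ih => exact (single hstep.2.1 hstep.1 hstep.2.2.symm).trans ih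

lemma mono (hst : s ⊆ t) (h : ReachIn G s u v) : ReachIn G t u v :=
  Relation.ReflTransGen.mono (fun _ _ ⟨ha, hb, hab⟩ => ⟨hst ha, hst hb, hab⟩) _ _ h

lemma mem_right (h : ReachIn G s u v) (hu : u ∈ s) : v ∈ s := by
  rcases Relation.ReflTransGen.cases_tail h with rfl | ⟨_, _, hstep⟩
  · exact hu
  · exact hstep.2.1

lemma exists_adj_not_and (P : V → Prop) (h : ReachIn G s u v) (hu : ¬ P u) (hv : P v) :
    ∃ a b, ReachIn G s u a ∧ a ∈ s ∧ b ∈ s ∧ G.Adj a b ∧ ¬ P a ∧ P b := by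
  induction h with
  | refl => exact absurd hv hu
  | @tail a b ha hstep ih =>
    by_cases hPa : P a
    · exact ih hPa
    · exact ⟨a, b, ha, hstep.1, hstep.2.1, hstep.2.2, hPa, hv⟩

lemma erase_of_forall_not_adj (hu : u ∈ s.erase v)
    (hno : ∀ y, ReachIn G (s.erase v) u y → ¬ G.Adj y v) (h : ReachIn G s u w) :
    ReachIn G (s.erase v) u w := by
  induction h with
  | refl => exact Relation.ReflTransGen.refl
  | @tail b c _ hstep ih =>
    have hcv : c ≠ v := by
      rintro rfl
      exact hno b ih hstep.2.2
    exact ih.tail ⟨ih.mem_right hu, Finset.mem_erase.2 ⟨hcv, hstep.2.1⟩, hstep.2.2⟩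

end ReachIn

section Components

variable {G : SimpleGraph V} {s B : Finset V} {u v x y : V}

lemma mem_compIn : u ∈ compIn G s v ↔ u ∈ s ∧ ReachIn G s v u := Finset.mem_filter

lemma compIn_subset : compIn G s v ⊆ s := Finset.filter_subset _ _

lemma self_mem_compIn (hv : v ∈ s) : v ∈ compIn G s v :=
  mem_compIn.2 ⟨hv, Relation.ReflTransGen.refl⟩

lemma reachIn_compIn (h : ReachIn G s v u) : ReachIn G (compIn G s v) v u := by
  induction h with
  | refl => exact Relation.ReflTransGen.refl
  | @tail b c hb hstep ih =>
    exact ih.tail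
      ⟨mem_compIn.2 ⟨hstep.1, hb⟩, mem_compIn.2 ⟨hstep.2.1, hb.tail hstep⟩, hstep.2.2⟩

lemma connIn_compIn (hv : v ∈ s) : ConnIn G (compIn G s v) :=
  ⟨⟨v, self_mem_compIn hv⟩, fun _ ha _ hb =>
    (reachIn_compIn (mem_compIn.1 ha).2).symm.trans (reachIn_compIn (mem_compIn.1 hb).2)⟩

lemma compIn_eq_of_reachIn (h : ReachIn G s x y) : compIn G s x = compIn G s y := by
  ext u
  simp only [mem_compIn]
  exact ⟨fun ⟨hu, hr⟩ => ⟨hu, h.symm.trans hr⟩,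
    fun ⟨hu, hr⟩ => ⟨hu, h.trans hr⟩⟩

lemma subset_compIn (hBs : B ⊆ s) (hB : ConnIn G B) (hy : y ∈ B) : B ⊆ compIn G s y :=
  fun _ hw => mem_compIn.2 ⟨hBs hw, (hB.2 y hy _ hw).mono hBs⟩

lemma compIn_ssubset (hv : v ∈ s) (hs : ¬ ConnIn G s) : compIn G s v ⊂ s := by
  refine ssubset_of_subset_of_ne compIn_subset fun h => hs ⟨⟨v, hv⟩, fun a ha b hb => ?_⟩
  rw [← h] at ha hb
  exact (mem_compIn.1 ha).2.symm.trans (mem_compIn.1 hb).2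

lemma connIn_insert (h : ∀ w ∈ B, G.Adj v w) : ConnIn G (insert v B) := by
  have hv : v ∈ insert v B := Finset.mem_insert_self v B
  have hreach : ∀ w ∈ insert v B, ReachIn G (insert v B) v w := fun w hw => by
    rcases Finset.mem_insert.1 hw with rfl | hwB
    · exact Relation.ReflTransGen.refl
    · exact ReachIn.single hv hw (h w hwB)
  exact ⟨⟨v, hv⟩, fun a ha b hb => (hreach a ha).symm.trans (hreach b hb)⟩

lemma exists_reachIn_erase_adj (hs : ConnIn G s) (hv : v ∈ s) (hx : x ∈ s.erase v) :
    ∃ y, ReachIn G (s.erase v) x y ∧ G.Adj y v := by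
  by_contra! hno
  have := ReachIn.erase_of_forall_not_adj hx hno (hs.2 x (Finset.mem_of_mem_erase hx) v hv)
  exact (Finset.mem_erase.1 (this.mem_right hx)).1 rfl

lemma connIn_of_adj (hv : v ∈ s) (h : ∀ w ∈ s.erase v, G.Adj v w) : ConnIn G s := by
  simpa only [Finset.insert_erase hv] using connIn_insert h

end Components

section Treedepth

variable {G : SimpleGraph V} {s t C : Finset V} {v : V}

lemma tdAux_empty (n : ℕ) : tdAux G n ∅ = 0 := by
  cases n <;> simp [tdAux]

lemma tdAux_eq_of_card_le : ∀ n m (s : Finset V), s.card ≤ n → s.card ≤ m →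
    tdAux G n s = tdAux G m s
  | 0, m, s, hn, _ => by rw [Finset.card_eq_zero.1 (Nat.le_zero.1 hn), tdAux_empty, tdAux_empty]
  | n + 1, 0, s, _, hm => by
    rw [Finset.card_eq_zero.1 (Nat.le_zero.1 hm), tdAux_empty, tdAux_empty]
  | n + 1, m + 1, s, hn, hm => by
    simp only [tdAux]
    split_ifs with hs hc
    · rfl
    · congr 1
      refine Finset.inf'_congr _ rfl fun a ha => ?_
      have := Finset.card_erase_of_mem ha
      exact tdAux_eq_of_card_le n m _ (by omega) (by omega)
    · refine Finset.sup_congr rfl fun a ha => ?_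
      have := Finset.card_lt_card (compIn_ssubset ha hc)
      exact tdAux_eq_of_card_le n m _ (by omega) (by omega)

lemma tdOn_empty : tdOn G ∅ = 0 := tdAux_empty 0

lemma tdOn_of_connIn (hc : ConnIn G s) :
    tdOn G s = 1 + s.inf' hc.1 (fun v => tdOn G (s.erase v)) := by
  have hcard := Finset.card_pos.2 hc.1
  rw [tdOn, ← Nat.sub_add_cancel hcard, tdAux, dif_neg hc.1.ne_empty, if_pos hc]
  congr 1
  refine Finset.inf'_congr _ rfl fun a ha => ?_
  have := Finset.card_erase_of_mem ha
  exact tdAux_eq_of_card_le _ _ _ (by omega) le_rfl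

lemma tdOn_of_not_connIn (hs : s.Nonempty) (hc : ¬ ConnIn G s) :
    tdOn G s = s.sup (fun v => tdOn G (compIn G s v)) := by
  have hcard := Finset.card_pos.2 hs
  rw [tdOn, ← Nat.sub_add_cancel hcard, tdAux, dif_neg hs.ne_empty, if_neg hc]
  refine Finset.sup_congr rfl fun a ha => ?_
  have := Finset.card_lt_card (compIn_ssubset ha hc)
  exact tdAux_eq_of_card_le _ _ _ (by omega) le_rfl

lemma tdOn_le_of_forall_connIn {k : ℕ} (h : ∀ C ⊆ s, ConnIn G C → tdOn G C ≤ k) :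
    tdOn G s ≤ k := by
  rcases s.eq_empty_or_nonempty with rfl | hs
  · simp [tdOn_empty]
  by_cases hc : ConnIn G s
  · exact h s le_rfl hc
  rw [tdOn_of_not_connIn hs hc]
  exact Finset.sup_le fun v hv => h _ compIn_subset (connIn_compIn hv)

lemma tdOn_le_one_add_tdOn_erase_of_connIn (hC : ConnIn G C) (u : V) :
    tdOn G C ≤ 1 + tdOn G (C.erase u) := by
  by_cases hu : u ∈ C
  · rw [tdOn_of_connIn hC]
    exact Nat.add_le_add_left (Finset.inf'_le _ hu) 1
  · rw [Finset.erase_eq_of_notMem hu]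
    omega

lemma tdOn_mono (hst : s ⊆ t) : tdOn G s ≤ tdOn G t := by
  induction t using Finset.strongInduction generalizing s with
  | H t ih =>
  refine tdOn_le_of_forall_connIn fun C hCs hC => ?_
  have hCt := hCs.trans hst
  by_cases ht : ConnIn G t
  · obtain ⟨v, hv, hmin⟩ := Finset.exists_mem_eq_inf' ht.1 (fun v => tdOn G (t.erase v))
    calc tdOn G C ≤ 1 + tdOn G (C.erase v) := tdOn_le_one_add_tdOn_erase_of_connIn hC v
      _ ≤ 1 + tdOn G (t.erase v) :=
        Nat.add_le_add_left (ih _ (Finset.erase_ssubset hv) (Finset.erase_subset_erase v hCt)) 1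
      _ = tdOn G t := by rw [tdOn_of_connIn ht, hmin]
  · obtain ⟨x, hx⟩ := hC.1
    have hxt := hCt hx
    rw [tdOn_of_not_connIn ⟨x, hxt⟩ ht]
    exact (ih _ (compIn_ssubset hxt ht) (subset_compIn hCt hC hx)).trans
      (Finset.le_sup (f := fun v => tdOn G (compIn G t v)) hxt)

lemma tdOn_le_one_add_tdOn_erase (t : Finset V) (u : V) : tdOn G t ≤ 1 + tdOn G (t.erase u) :=
  tdOn_le_of_forall_connIn fun _ hCt hC =>
    (tdOn_le_one_add_tdOn_erase_of_connIn hC u).trans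
      (Nat.add_le_add_left (tdOn_mono (Finset.erase_subset_erase u hCt)) 1)

lemma tdOn_eq_one_add_tdOn_erase_of_adj (hv : v ∈ s) (hdom : ∀ w ∈ s.erase v, G.Adj v w) :
    tdOn G s = 1 + tdOn G (s.erase v) := by
  induction s using Finset.strongInduction with
  | H s ih =>
  rw [tdOn_of_connIn (connIn_of_adj hv hdom)]
  congr 1
  refine le_antisymm (Finset.inf'_le _ hv) (Finset.le_inf' _ _ fun u hu => ?_)
  rcases eq_or_ne u v with rfl | huv
  · exact le_rfl
  have hvu : v ∈ s.erase u := Finset.mem_erase.2 ⟨huv.symm, hv⟩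
  have hdom' : ∀ w ∈ (s.erase u).erase v, G.Adj v w := fun w hw =>
    hdom w (Finset.erase_subset_erase v (Finset.erase_subset u s) hw)
  rw [ih _ (Finset.erase_ssubset hu) hvu hdom', Finset.erase_right_comm]
  exact tdOn_le_one_add_tdOn_erase _ u

end Treedepth

noncomputable def blocks (G : SimpleGraph V) (s : Finset V) : Finset (Finset V) :=
  s.powerset.filter (fun B => IsBlock G s B)

section TwoTreedepth

variable {G : SimpleGraph V} {s B : Finset V} {x y : V}

lemma mem_blocks : B ∈ blocks G s ↔ IsBlock G s B :=
  Finset.mem_filter.trans ⟨And.right, fun h => ⟨Finset.mem_powerset.2 h.1, h⟩⟩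

lemma IsBlock.ssubset_of_not_isBlockSet (hB : IsBlock G s B) (hs : ¬ IsBlockSet G s) : B ⊂ s :=
  ssubset_of_subset_of_ne hB.1 fun h => hs (h ▸ hB.2.1)

lemma IsBlock.of_compIn (hB : IsBlock G (compIn G s x) B) : IsBlock G s B := by
  obtain ⟨hBC, hBb, hBmax⟩ := hB
  obtain ⟨y, hy⟩ := hBb.1.1
  refine ⟨hBC.trans compIn_subset, hBb, fun B' hBB' hB's hB' => hBmax B' hBB' ?_ hB'⟩
  rw [compIn_eq_of_reachIn (mem_compIn.1 (hBC hy)).2]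
  exact subset_compIn hB's hB'.1 (hBB' hy)

lemma IsBlock.compIn (hB : IsBlock G s B) (hy : y ∈ B) : IsBlock G (compIn G s y) B :=
  ⟨subset_compIn hB.1 hB.2.1.1 hy, hB.2.1,
    fun B' h₁ h₂ h₃ => hB.2.2 B' h₁ (h₂.trans compIn_subset) h₃⟩

lemma isBlock_compIn (hx : x ∈ s) (hC : IsBlockSet G (compIn G s x)) :
    IsBlock G s (compIn G s x) :=
  ⟨compIn_subset, hC, fun _ h₁ h₂ h₃ =>
    (subset_compIn h₂ h₃.1 (h₁ (self_mem_compIn hx))).antisymm h₁⟩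

lemma td2Aux_empty (n : ℕ) : td2Aux G n ∅ = 0 := by
  cases n <;> simp [td2Aux]

lemma td2Aux_eq_of_card_le : ∀ n m (s : Finset V), s.card ≤ n → s.card ≤ m →
    td2Aux G n s = td2Aux G m s
  | 0, m, s, hn, _ => by rw [Finset.card_eq_zero.1 (Nat.le_zero.1 hn), td2Aux_empty, td2Aux_empty]
  | n + 1, 0, s, _, hm => by
    rw [Finset.card_eq_zero.1 (Nat.le_zero.1 hm), td2Aux_empty, td2Aux_empty]
  | n + 1, m + 1, s, hn, hm => by
    simp only [td2Aux]
    split_ifs with hs hb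
    · rfl
    · congr 1
      refine Finset.inf'_congr _ rfl fun a ha => ?_
      have := Finset.card_erase_of_mem ha
      exact td2Aux_eq_of_card_le n m _ (by omega) (by omega)
    · refine Finset.sup_congr rfl fun B hB => ?_
      have := Finset.card_lt_card ((mem_blocks.1 hB).ssubset_of_not_isBlockSet hb)
      exact td2Aux_eq_of_card_le n m _ (by omega) (by omega)

lemma td2On_empty : td2On G ∅ = 0 := td2Aux_empty 0

lemma td2On_of_isBlockSet (hb : IsBlockSet G s) :
    td2On G s = 1 + s.inf' hb.1.1 (fun v => td2On G (s.erase v)) := by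
  have hcard := Finset.card_pos.2 hb.1.1
  rw [td2On, ← Nat.sub_add_cancel hcard, td2Aux, dif_neg hb.1.1.ne_empty, if_pos hb]
  congr 1
  refine Finset.inf'_congr _ rfl fun a ha => ?_
  have := Finset.card_erase_of_mem ha
  exact td2Aux_eq_of_card_le _ _ _ (by omega) le_rfl

lemma td2On_of_not_isBlockSet (hs : s.Nonempty) (hb : ¬ IsBlockSet G s) :
    td2On G s = (blocks G s).sup (td2On G) := by
  have hcard := Finset.card_pos.2 hs
  rw [td2On, ← Nat.sub_add_cancel hcard, td2Aux, dif_neg hs.ne_empty, if_neg hb]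
  refine Finset.sup_congr rfl fun B hB => ?_
  have := Finset.card_lt_card ((mem_blocks.1 hB).ssubset_of_not_isBlockSet hb)
  exact td2Aux_eq_of_card_le _ _ _ (by omega) le_rfl

lemma td2On_le_of_isBlock (hB : IsBlock G s B) : td2On G B ≤ td2On G s := by
  by_cases hs : IsBlockSet G s
  · rw [hB.2.2 s hB.1 le_rfl hs]
  · rw [td2On_of_not_isBlockSet (hB.2.1.1.1.mono hB.1) hs]
    exact Finset.le_sup (mem_blocks.2 hB)

lemma td2On_of_not_connIn (hs : s.Nonempty) (hc : ¬ ConnIn G s) :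
    td2On G s = s.sup (fun v => td2On G (compIn G s v)) := by
  rw [td2On_of_not_isBlockSet hs fun hb => hc hb.1]
  refine le_antisymm (Finset.sup_le fun B hB => ?_) (Finset.sup_le fun x hx => ?_)
  · obtain ⟨y, hy⟩ := (mem_blocks.1 hB).2.1.1.1
    exact (td2On_le_of_isBlock ((mem_blocks.1 hB).compIn hy)).trans
      (Finset.le_sup (f := fun v => td2On G (compIn G s v)) ((mem_blocks.1 hB).1 hy))
  · by_cases hC : IsBlockSet G (compIn G s x)
    · exact Finset.le_sup (mem_blocks.2 (isBlock_compIn hx hC))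
    · rw [td2On_of_not_isBlockSet ⟨x, self_mem_compIn hx⟩ hC]
      exact Finset.sup_mono fun B hB => mem_blocks.2 (mem_blocks.1 hB).of_compIn

end TwoTreedepth

section DominatingVertex

variable {G : SimpleGraph V} {s B : Finset V} {u v : V}

lemma IsBlockSet.connIn_erase (hB : IsBlockSet G B) (hne : (B.erase v).Nonempty) :
    ConnIn G (B.erase v) := by
  by_cases hv : v ∈ B
  · exact hB.2 v hv hne
  · simpa only [Finset.erase_eq_of_notMem hv] using hB.1

lemma subset_insert_compIn_erase (hB : IsBlockSet G B) (hBs : B ⊆ s) (hu : u ∈ B.erase v) :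
    B ⊆ insert v (compIn G (s.erase v) u) :=
  (Finset.insert_erase_subset v B).trans <| Finset.insert_subset_insert v <|
    subset_compIn (Finset.erase_subset_erase v hBs) (hB.connIn_erase ⟨u, hu⟩) hu

lemma isBlock_insert_compIn_erase (hv : v ∈ s) (hdom : ∀ w ∈ s.erase v, G.Adj v w)
    (hu : u ∈ s.erase v) : IsBlock G s (insert v (compIn G (s.erase v) u)) := by
  set C := compIn G (s.erase v) u
  have hdomC : ∀ w ∈ C, G.Adj v w := fun w hw => hdom w (compIn_subset hw)
  have hvC : v ∉ C := fun h => (Finset.mem_erase.1 (compIn_subset h)).1 rfl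
  refine ⟨Finset.insert_subset hv (compIn_subset.trans (Finset.erase_subset v s)),
    ⟨connIn_insert hdomC, fun w _ _ => ?_⟩, fun B' hCB' hB's hB' => ?_⟩
  · rcases eq_or_ne w v with rfl | hwv
    · rw [Finset.erase_insert hvC]
      exact connIn_compIn hu
    · rw [Finset.erase_insert_of_ne hwv.symm]
      exact connIn_insert fun x hx => hdomC x (Finset.mem_of_mem_erase hx)
  · have huB' : u ∈ B'.erase v :=
      Finset.mem_erase.2 ⟨(Finset.mem_erase.1 hu).1,
        hCB' (Finset.mem_insert_of_mem (self_mem_compIn hu))⟩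
    exact (subset_insert_compIn_erase hB' hB's huB').antisymm hCB'

lemma blocks_eq_image_of_adj (hv : v ∈ s) (hdom : ∀ w ∈ s.erase v, G.Adj v w)
    (hne : (s.erase v).Nonempty) :
    blocks G s = (s.erase v).image (fun u => insert v (compIn G (s.erase v) u)) := by
  ext B
  rw [mem_blocks, Finset.mem_image]
  constructor
  · intro hB
    obtain ⟨u, hu, hBsub⟩ : ∃ u ∈ s.erase v, B ⊆ insert v (compIn G (s.erase v) u) := by
      rcases (B.erase v).eq_empty_or_nonempty with hBv | ⟨u, hu⟩
      · obtain ⟨u, hu⟩ := hne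
        refine ⟨u, hu, fun w hw => ?_⟩
        rcases eq_or_ne w v with rfl | hwv
        · exact Finset.mem_insert_self w _
        · exact absurd (Finset.mem_erase.2 ⟨hwv, hw⟩) (hBv ▸ Finset.notMem_empty w)
      · exact ⟨u, Finset.erase_subset_erase v hB.1 hu,
          subset_insert_compIn_erase hB.2.1 hB.1 hu⟩
    have hblock := isBlock_insert_compIn_erase hv hdom hu
    exact ⟨u, hu, hB.2.2 _ hBsub hblock.1 hblock.2.1⟩
  · rintro ⟨u, hu, rfl⟩
    exact isBlock_insert_compIn_erase hv hdom hu

lemma tdOn_eq_sup_blocks_of_adj (hv : v ∈ s) (hdom : ∀ w ∈ s.erase v, G.Adj v w)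
    (hne : (s.erase v).Nonempty) (hcut : ¬ ConnIn G (s.erase v)) :
    tdOn G s = (blocks G s).sup (tdOn G) := by
  have hvC : ∀ u, v ∉ compIn G (s.erase v) u := fun u h =>
    (Finset.mem_erase.1 (compIn_subset h)).1 rfl
  have hdomC : ∀ u, ∀ w ∈ (insert v (compIn G (s.erase v) u)).erase v, G.Adj v w :=
    fun u w hw => hdom w (compIn_subset (Finset.erase_insert (hvC u) ▸ hw))
  rw [blocks_eq_image_of_adj hv hdom hne, Finset.sup_image,
    tdOn_eq_one_add_tdOn_erase_of_adj hv hdom, tdOn_of_not_connIn hne hcut, Finset.add_sup hne]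
  refine Finset.sup_congr rfl fun u _ => ?_
  rw [Function.comp_apply,
    tdOn_eq_one_add_tdOn_erase_of_adj (Finset.mem_insert_self v _) (hdomC u),
    Finset.erase_insert (hvC u)]

end DominatingVertex

section P4Free

variable {G : SimpleGraph V} {s : Finset V} {a b c d v x : V}

lemma hasInducedPathOn_four (hab : G.Adj a b) (hbc : G.Adj b c) (hcd : G.Adj c d)
    (hac : ¬ G.Adj a c) (hbd : ¬ G.Adj b d) (had : ¬ G.Adj a d) : HasInducedPathOn G 4 := by
  refine ⟨![a, b, c, d], ?_, ?_⟩
  · have := hab.ne; have := hbc.ne; have := hcd.ne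
    have : a ≠ c := by rintro rfl; exact had hcd
    have : b ≠ d := by rintro rfl; exact had hab
    have : a ≠ d := by rintro rfl; exact hac hcd.symm
    intro i j hij
    fin_cases i <;> fin_cases j <;> simp_all
  · intro i j
    fin_cases i <;> fin_cases j <;> simp_all [G.adj_comm]

lemma PtFree.adj_of_not_connIn_erase (hfree : PtFree G 4) (hs : ConnIn G s) (hv : v ∈ s)
    (hcut : ¬ ConnIn G (s.erase v)) (hx : x ∈ s.erase v) : G.Adj v x := by
  by_contra hvx
  set t := s.erase v
  obtain ⟨u, hu, hxu⟩ : ∃ u ∈ t, ¬ ReachIn G t x u := by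
    by_contra! h
    exact hcut ⟨⟨x, hx⟩, fun a ha b hb => (h a ha).symm.trans (h b hb)⟩
  obtain ⟨y, huy, hyv⟩ := exists_reachIn_erase_adj hs hv hu
  have hxy : ¬ ReachIn G t x y := fun h => hxu (h.trans huy.symm)
  have hy : y ∈ t := huy.mem_right hu
  obtain ⟨z, hxz, hzv⟩ := exists_reachIn_erase_adj hs hv hx
  obtain ⟨a, b, hxa, ha, hb, hab, hva, hvb⟩ :=
    hxz.exists_adj_not_and (G.Adj v) hvx hzv.symm
  have hxb : ReachIn G t x b := hxa.tail ⟨ha, hb, hab⟩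
  exact hfree <| hasInducedPathOn_four hyv hvb hab.symm
    (fun h => hxy (hxb.tail ⟨hb, hy, h.symm⟩)) hva
    (fun h => hxy (hxa.tail ⟨ha, hy, h.symm⟩))

lemma PtFree.tdOn_eq_sup_blocks (hfree : PtFree G 4) (hs : ConnIn G s) (hb : ¬ IsBlockSet G s) :
    tdOn G s = (blocks G s).sup (tdOn G) := by
  obtain ⟨v, hv, hne, hcut⟩ :
      ∃ v ∈ s, (s.erase v).Nonempty ∧ ¬ ConnIn G (s.erase v) := by
    by_contra! h
    exact hb ⟨hs, h⟩
  exact tdOn_eq_sup_blocks_of_adj hv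
    (fun _ hx => hfree.adj_of_not_connIn_erase hs hv hcut hx) hne hcut

lemma PtFree.td2On_eq_tdOn (hfree : PtFree G 4) (s : Finset V) : td2On G s = tdOn G s := by
  induction s using Finset.strongInduction with
  | H s ih =>
  rcases s.eq_empty_or_nonempty with rfl | hne
  · rw [td2On_empty, tdOn_empty]
  by_cases hb : IsBlockSet G s
  · rw [td2On_of_isBlockSet hb, tdOn_of_connIn hb.1]
    congr 1
    exact Finset.inf'_congr _ rfl fun v hv => ih _ (Finset.erase_ssubset hv)
  by_cases hc : ConnIn G s
  · rw [td2On_of_not_isBlockSet hne hb, hfree.tdOn_eq_sup_blocks hc hb]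
    exact Finset.sup_congr rfl fun B hB => ih B ((mem_blocks.1 hB).ssubset_of_not_isBlockSet hb)
  · rw [td2On_of_not_connIn hne hc, tdOn_of_not_connIn hne hc]
    exact Finset.sup_congr rfl fun v hv => ih _ (compIn_ssubset hv hc)

end P4Free

theorem p4free_td_eq_td2 {V : Type} [Fintype V] (G : SimpleGraph V)
    (hfree : PtFree G 4) : td G = td2 G :=
  (hfree.td2On_eq_tdOn Finset.univ).symm
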